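/- Let m, n be positive integers, 1 ≤ k ≤ m, and 1 ≤ s ≤ q. Set ρ := (m s q)/(k q + (m−k) s). Then for every scalar matrix (a_i)_{i ∈ {1,…,n}^m}, (∑_{i ∈ {1,…,n}^m} |a_i|^ρ)^{1/ρ} ≤ ∏_{S ∈ P_k(m)} [ (∑_{i_S} (∑_{i_{Ŝ}} |a_i|^q)^{s/q})^{1/s} ]^{1/C(m,k)}, where the product is over all subsets S of {1,…,m} of cardinality k, C(m,k) is the binomial coefficient, i_S denotes the indices with coordinates in S, and Ŝ = {1,…,m} \ S. -/

import Mathlib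

/-!
Write `‖x‖_p` for the mixed norm `ℓ^{p 0}(ℓ^{p 1}(⋯ ℓ^{p (m-1)}))` of a function on
`Fin m → Fin n`, coordinate `0` outermost. For `S ∈ P_k(m)` let `p_S j = s` for `j ∈ S` and
`p_S j = q` otherwise. Peeling off one coordinate at a time, Minkowski's integral inequality
(valid since `s ≤ q`) moves the `ℓ^q` sums over the coordinates outside `S` inside the `ℓ^s` sums
over `S`, so the factor of the product indexed by `S` dominates `‖x‖_{p_S}`.

Every coordinate lies in a fraction `k / m` of the sets `S`, so with equal weights `1 / C(m,k)`
the reciprocal exponents average to `k / (m s) + (m - k) / (m q) = 1 / ρ` in every coordinate.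
The interpolation inequality for mixed norms, obtained by applying Hölder's inequality
coordinate by coordinate, then gives `‖x‖_ρ ≤ ∏_S ‖x‖_{p_S} ^ (1 / C(m,k))`.
-/

open Finset

/-- Combine an assignment `g` of indices on the coordinates in `S` with an
assignment `h` on the complementary coordinates into a full multi-index. -/
def mergeIndex {m n : ℕ} (S : Finset (Fin m)) (g : {x // x ∈ S} → Fin n)
    (h : {x // x ∈ Sᶜ} → Fin n) : Fin m → Fin n :=
  fun j => if hj : j ∈ S then g ⟨j, hj⟩ else h ⟨j, Finset.mem_compl.mpr hj⟩

open scoped NNReal ENNReal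

/-- Hölder's inequality for several functions. -/
theorem NNReal.sum_prod_rpow_le_prod_sum_rpow {ι κ : Type*} [Fintype κ] (T : Finset ι)
    {w : ι → ℝ} (hw : ∀ i ∈ T, 0 ≤ w i) (hw1 : ∑ i ∈ T, w i = 1) (f : ι → κ → ℝ≥0) :
    ∑ j, ∏ i ∈ T, f i j ^ w i ≤ ∏ i ∈ T, (∑ j, f i j) ^ w i := by
  let _ : MeasurableSpace κ := ⊤
  have _ : MeasurableSingletonClass κ := ⟨fun _ => trivial⟩
  have h := ENNReal.lintegral_prod_norm_pow_le (μ := MeasureTheory.Measure.count) T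
    (f := fun i j => (f i j : ℝ≥0∞)) (fun _ _ => measurable_from_top.aemeasurable) hw1 hw
  simp only [MeasureTheory.lintegral_fintype, MeasureTheory.Measure.count_singleton,
    mul_one] at h
  have hcoe (x : ℝ≥0) {i} (hi : i ∈ T) : ((x ^ w i : ℝ≥0) : ℝ≥0∞) = (x : ℝ≥0∞) ^ w i :=
    ENNReal.coe_rpow_of_nonneg _ (hw i hi)
  rw [← ENNReal.coe_le_coe]
  push_cast
  rw [sum_congr rfl fun j _ => prod_congr rfl fun i hi => hcoe (f i j) hi,
    prod_congr rfl fun i hi => hcoe _ hi]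
  push_cast
  exact h

noncomputable def ellNorm {β : Type*} [Fintype β] (p : ℝ) (f : β → ℝ≥0) : ℝ≥0 :=
  (∑ b, f b ^ p) ^ (1 / p)

section ellNorm

variable {β γ : Type*} [Fintype β] [Fintype γ]

lemma ellNorm_mono {p : ℝ} (hp : 0 < p) {f g : β → ℝ≥0} (hfg : f ≤ g) :
    ellNorm p f ≤ ellNorm p g := by
  unfold ellNorm
  gcongr with b
  exact hfg b

lemma ellNorm_of_unique [Unique β] {p : ℝ} (hp : p ≠ 0) (f : β → ℝ≥0) :
    ellNorm p f = f default := by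
  rw [ellNorm, Fintype.sum_unique, ← NNReal.rpow_mul, mul_one_div_cancel hp, NNReal.rpow_one]

lemma ellNorm_comp_equiv (p : ℝ) (e : γ ≃ β) (f : β → ℝ≥0) :
    ellNorm p (f ∘ e) = ellNorm p f :=
  congrArg (· ^ (1 / p)) (e.sum_comp fun b => f b ^ p)

lemma ellNorm_prod_type {p : ℝ} (hp : p ≠ 0) (f : β × γ → ℝ≥0) :
    ellNorm p f = ellNorm p fun b => ellNorm p fun c => f (b, c) := by
  simp only [ellNorm, ← NNReal.rpow_mul, one_div_mul_cancel hp, NNReal.rpow_one,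
    Fintype.sum_prod_type]

lemma ellNorm_zero {p : ℝ} (hp : p ≠ 0) : ellNorm p (0 : β → ℝ≥0) = 0 := by
  simp [ellNorm, hp]

lemma ellNorm_add_le {p : ℝ} (hp : 1 ≤ p) (f g : β → ℝ≥0) :
    ellNorm p (f + g) ≤ ellNorm p f + ellNorm p g :=
  NNReal.Lp_add_le univ f g hp

lemma ellNorm_sum_le {ι : Type*} {p : ℝ} (hp : 1 ≤ p) (T : Finset ι) (f : ι → β → ℝ≥0) :
    ellNorm p (∑ i ∈ T, f i) ≤ ∑ i ∈ T, ellNorm p (f i) :=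
  le_sum_of_subadditive (ellNorm p) (ellNorm_zero (one_pos.trans_le hp).ne').le
    (ellNorm_add_le hp) T f

lemma ellNorm_rpow {p r : ℝ} (hr : r ≠ 0) (f : β → ℝ≥0) :
    ellNorm p (fun b => f b ^ r) = ellNorm (r * p) f ^ r := by
  simp only [ellNorm, ← NNReal.rpow_mul]
  congr 1
  field_simp

/-- Minkowski's integral inequality. -/
lemma ellNorm_ellNorm_le_swap {s q : ℝ} (hs : 0 < s) (hsq : s ≤ q) (f : β → γ → ℝ≥0) :
    ellNorm q (fun b => ellNorm s (f b)) ≤ ellNorm s fun c => ellNorm q fun b => f b c := by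
  have hsr : s * (q / s) = q := mul_div_cancel₀ q hs.ne'
  calc ellNorm q (fun b => ellNorm s (f b))
      = ellNorm (q / s) (∑ c, fun b => f b c ^ s) ^ (1 / s) := by
        rw [show q / s = 1 / s * q by ring, ← ellNorm_rpow (one_div_ne_zero hs.ne')]
        simp only [Finset.sum_apply]
        rfl
    _ ≤ (∑ c, ellNorm (q / s) fun b => f b c ^ s) ^ (1 / s) := by
        gcongr
        exact ellNorm_sum_le ((one_le_div hs).2 hsq) univ fun c b => f b c ^ s
    _ = ellNorm s fun c => ellNorm q fun b => f b c := by
        simp only [ellNorm_rpow hs.ne', hsr]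
        rfl

lemma ellNorm_prod_rpow_le {ι : Type*} (T : Finset ι) {w P : ι → ℝ} {p : ℝ}
    (hw : ∀ i ∈ T, 0 ≤ w i) (hP : ∀ i ∈ T, 0 < P i) (hp : 0 < p)
    (hpP : 1 / p = ∑ i ∈ T, w i / P i) (f : ι → β → ℝ≥0) :
    ellNorm p (fun b => ∏ i ∈ T, f i b ^ w i) ≤ ∏ i ∈ T, ellNorm (P i) (f i) ^ w i := by
  have hv : ∀ i ∈ T, 0 ≤ p * w i / P i := fun i hi =>
    div_nonneg (mul_nonneg hp.le (hw i hi)) (hP i hi).le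
  have hv1 : ∑ i ∈ T, p * w i / P i = 1 := by
    simp_rw [mul_div_assoc, ← mul_sum, ← hpP, mul_one_div_cancel hp.ne']
  have hpow : ∀ b, (∏ i ∈ T, f i b ^ w i) ^ p = ∏ i ∈ T, (f i b ^ P i) ^ (p * w i / P i) := by
    intro b
    rw [← NNReal.finsetProd_rpow]
    refine prod_congr rfl fun i hi => ?_
    rw [← NNReal.rpow_mul, ← NNReal.rpow_mul]
    congr 1
    field_simp [(hP i hi).ne']
  calc ellNorm p (fun b => ∏ i ∈ T, f i b ^ w i)
      = (∑ b, ∏ i ∈ T, (f i b ^ P i) ^ (p * w i / P i)) ^ (1 / p) := by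
        simp only [ellNorm, hpow]
    _ ≤ (∏ i ∈ T, (∑ b, f i b ^ P i) ^ (p * w i / P i)) ^ (1 / p) := by
        gcongr
        exact NNReal.sum_prod_rpow_le_prod_sum_rpow T hv hv1 _
    _ = ∏ i ∈ T, ellNorm (P i) (f i) ^ w i := by
        rw [← NNReal.finsetProd_rpow]
        refine prod_congr rfl fun i hi => ?_
        rw [ellNorm, ← NNReal.rpow_mul, ← NNReal.rpow_mul]
        congr 1
        field_simp [(hP i hi).ne']

end ellNorm

section mixedNorm

variable {β : Type*} [Fintype β]

noncomputable def mixedNorm : (m : ℕ) → (Fin m → ℝ) → ((Fin m → β) → ℝ≥0) → ℝ≥0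
  | 0, _, x => x default
  | m + 1, p, x => ellNorm (p 0) fun b => mixedNorm m (Fin.tail p) fun t => x (Fin.cons b t)

lemma mixedNorm_const {ρ : ℝ} (hρ : ρ ≠ 0) (m : ℕ) (x : (Fin m → β) → ℝ≥0) :
    mixedNorm m (fun _ => ρ) x = ellNorm ρ x := by
  induction m with
  | zero => exact (ellNorm_of_unique hρ x).symm
  | succ m ih =>
    rw [mixedNorm, ← ellNorm_comp_equiv ρ (Fin.consEquiv fun _ => β) x, ellNorm_prod_type hρ]
    exact congrArg _ (funext fun b => ih _)

/-- Interpolation of mixed norms (Benedek–Panzone). -/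
theorem mixedNorm_le_prod_rpow {ι : Type*} (T : Finset ι) {w : ι → ℝ}
    (hw : ∀ i ∈ T, 0 ≤ w i) (hw1 : ∑ i ∈ T, w i = 1) (m : ℕ) {p : Fin m → ℝ}
    {P : ι → Fin m → ℝ} (hp : ∀ j, 0 < p j) (hP : ∀ i ∈ T, ∀ j, 0 < P i j)
    (hpP : ∀ j, 1 / p j = ∑ i ∈ T, w i / P i j) (x : (Fin m → β) → ℝ≥0) :
    mixedNorm m p x ≤ ∏ i ∈ T, mixedNorm m (P i) x ^ w i := by
  induction m with
  | zero =>
    refine le_of_eq (NNReal.coe_injective ?_)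
    push_cast [mixedNorm]
    rw [← Real.rpow_sum_of_nonneg (NNReal.coe_nonneg _) hw, hw1, Real.rpow_one]
  | succ m ih =>
    calc mixedNorm (m + 1) p x
        ≤ ellNorm (p 0) fun b =>
            ∏ i ∈ T, mixedNorm m (Fin.tail (P i)) (fun t => x (Fin.cons b t)) ^ w i :=
          ellNorm_mono (hp 0) fun b =>
            ih (fun j => hp j.succ) (fun i hi j => hP i hi j.succ) (fun j => hpP j.succ) _
      _ ≤ ∏ i ∈ T, mixedNorm (m + 1) (P i) x ^ w i :=
          ellNorm_prod_rpow_le T hw (fun i hi => hP i hi 0) (hp 0) (hpP 0) _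

end mixedNorm

section SuccArrow

variable {β : Type*} {m : ℕ} (A : Finset (Fin (m + 1))) (A' : Finset (Fin m))
  (hA : ∀ i, i ∈ A' ↔ i.succ ∈ A)

def consArrowEquiv (h0 : 0 ∈ A) : β × ({i // i ∈ A'} → β) ≃ ({j // j ∈ A} → β) where
  toFun g j := Fin.cases (motive := fun j => j ∈ A → β) (fun _ => g.1)
    (fun i hi => g.2 ⟨i, (hA i).2 hi⟩) j.1 j.2
  invFun g := (g ⟨0, h0⟩, fun i => g ⟨i.1.succ, (hA i.1).1 i.2⟩)
  left_inv g := by simp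
  right_inv g := by
    funext ⟨j, hj⟩
    cases j using Fin.cases <;> simp

def succArrowEquiv (h0 : 0 ∉ A) : ({i // i ∈ A'} → β) ≃ ({j // j ∈ A} → β) where
  toFun g j := Fin.cases (motive := fun j => j ∈ A → β) (fun h => absurd h h0)
    (fun i hi => g ⟨i, (hA i).2 hi⟩) j.1 j.2
  invFun g i := g ⟨i.1.succ, (hA i.1).1 i.2⟩
  left_inv g := by simp
  right_inv g := by
    funext ⟨j, hj⟩
    cases j using Fin.cases with
    | zero => exact absurd hj h0
    | succ i => simp

end SuccArrow

lemma mem_compl_iff_succ_mem_compl {m : ℕ} {A : Finset (Fin (m + 1))} {A' : Finset (Fin m)}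
    (hA : ∀ i, i ∈ A' ↔ i.succ ∈ A) (i : Fin m) : i ∈ A'ᶜ ↔ i.succ ∈ Aᶜ := by
  simp [hA]

noncomputable def splitNorm {m n : ℕ} (S : Finset (Fin m)) (s q : ℝ)
    (x : (Fin m → Fin n) → ℝ≥0) : ℝ≥0 :=
  ellNorm s fun g => ellNorm q fun h => x (mergeIndex S g h)

lemma splitNorm_eq {m n : ℕ} (S : Finset (Fin m)) (s q : ℝ)
    (x : (Fin m → Fin n) → ℝ≥0) :
    splitNorm S s q x = (∑ g, (∑ h, x (mergeIndex S g h) ^ q) ^ (s / q)) ^ (1 / s) := by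
  simp only [splitNorm, ellNorm, ← NNReal.rpow_mul, one_div_mul_eq_div]

section SplitNorm

variable {m n : ℕ} {S : Finset (Fin (m + 1))} {S' : Finset (Fin m)} {s q : ℝ}

lemma mergeIndex_consArrowEquiv (hS : ∀ i, i ∈ S' ↔ i.succ ∈ S) (h0 : 0 ∈ S) (b : Fin n)
    (g : {i // i ∈ S'} → Fin n) (h : {i // i ∈ S'ᶜ} → Fin n) :
    mergeIndex S (consArrowEquiv S S' hS h0 (b, g))
      (succArrowEquiv Sᶜ S'ᶜ (mem_compl_iff_succ_mem_compl hS) (by simpa) h) =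
      Fin.cons b (mergeIndex S' g h) := by
  funext j
  cases j using Fin.cases with
  | zero => simp [mergeIndex, consArrowEquiv, h0]
  | succ i => by_cases hi : i ∈ S' <;> simp [mergeIndex, consArrowEquiv, succArrowEquiv, hi, ← hS]

lemma mergeIndex_succArrowEquiv (hS : ∀ i, i ∈ S' ↔ i.succ ∈ S) (h0 : 0 ∉ S) (b : Fin n)
    (g : {i // i ∈ S'} → Fin n) (h : {i // i ∈ S'ᶜ} → Fin n) :
    mergeIndex S (succArrowEquiv S S' hS h0 g)
      (consArrowEquiv Sᶜ S'ᶜ (mem_compl_iff_succ_mem_compl hS) (by simpa) (b, h)) =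
      Fin.cons b (mergeIndex S' g h) := by
  funext j
  cases j using Fin.cases with
  | zero => simp [mergeIndex, consArrowEquiv, h0]
  | succ i => by_cases hi : i ∈ S' <;> simp [mergeIndex, consArrowEquiv, succArrowEquiv, hi, ← hS]

lemma splitNorm_eq_ellNorm_of_mem (hS : ∀ i, i ∈ S' ↔ i.succ ∈ S) (hs : s ≠ 0) (h0 : 0 ∈ S)
    (x : (Fin (m + 1) → Fin n) → ℝ≥0) :
    splitNorm S s q x = ellNorm s fun b => splitNorm S' s q fun t => x (Fin.cons b t) := by
  rw [splitNorm, ← ellNorm_comp_equiv s (consArrowEquiv S S' hS h0), ellNorm_prod_type hs]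
  refine congrArg _ (funext fun b => congrArg _ (funext fun g => ?_))
  rw [Function.comp_apply,
    ← ellNorm_comp_equiv q (succArrowEquiv Sᶜ S'ᶜ (mem_compl_iff_succ_mem_compl hS) (by simpa))]
  simp only [Function.comp_def, mergeIndex_consArrowEquiv hS h0]

lemma ellNorm_splitNorm_le_of_notMem (hS : ∀ i, i ∈ S' ↔ i.succ ∈ S) (hs : 0 < s) (hsq : s ≤ q)
    (h0 : 0 ∉ S) (x : (Fin (m + 1) → Fin n) → ℝ≥0) :
    (ellNorm q fun b => splitNorm S' s q fun t => x (Fin.cons b t)) ≤ splitNorm S s q x := by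
  calc (ellNorm q fun b => splitNorm S' s q fun t => x (Fin.cons b t))
      ≤ ellNorm s fun g => ellNorm q fun b => ellNorm q fun h =>
          x (Fin.cons b (mergeIndex S' g h)) := ellNorm_ellNorm_le_swap hs hsq _
    _ = splitNorm S s q x := by
      rw [splitNorm, ← ellNorm_comp_equiv s (succArrowEquiv S S' hS h0)]
      refine congrArg _ (funext fun g => ?_)
      rw [Function.comp_apply,
        ← ellNorm_comp_equiv q (consArrowEquiv Sᶜ S'ᶜ (mem_compl_iff_succ_mem_compl hS) (by simpa)),
        ellNorm_prod_type (hs.trans_le hsq).ne']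
      simp only [Function.comp_def, mergeIndex_succArrowEquiv hS h0]

end SplitNorm

theorem mixedNorm_le_splitNorm {s q : ℝ} (hs : 0 < s) (hsq : s ≤ q) {n : ℕ} (m : ℕ)
    (S : Finset (Fin m)) (x : (Fin m → Fin n) → ℝ≥0) :
    mixedNorm m (fun j => if j ∈ S then s else q) x ≤ splitNorm S s q x := by
  have hq : 0 < q := hs.trans_le hsq
  induction m with
  | zero =>
    rw [mixedNorm, splitNorm, ellNorm_of_unique hs.ne', ellNorm_of_unique hq.ne']
    exact le_of_eq (congrArg x (Subsingleton.elim _ _))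
  | succ m ih =>
    obtain ⟨S', hS⟩ : ∃ S' : Finset (Fin m), ∀ i, i ∈ S' ↔ i.succ ∈ S :=
      ⟨univ.filter (·.succ ∈ S), by simp⟩
    have htail : Fin.tail (fun j => if j ∈ S then s else q) = fun j => if j ∈ S' then s else q := by
      funext i
      simp [Fin.tail, hS]
    rw [mixedNorm, htail]
    by_cases h0 : 0 ∈ S
    · rw [if_pos h0, splitNorm_eq_ellNorm_of_mem hS hs.ne' h0 x]
      exact ellNorm_mono hs fun b => ih S' _
    · rw [if_neg h0]
      exact (ellNorm_mono hq fun b => ih S' _).trans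
        (ellNorm_splitNorm_le_of_notMem hS hs hsq h0 x)

lemma mul_card_filter_mem_powersetCard {m : ℕ} (k : ℕ) (j : Fin m) :
    m * #{S ∈ powersetCard k univ | j ∈ S} = k * m.choose k := by
  cases k with
  | zero => simp
  | succ k =>
    obtain ⟨m, rfl⟩ := Nat.exists_eq_add_one_of_ne_zero j.pos.ne'
    have hfilter : {S ∈ powersetCard (k + 1) (univ : Finset (Fin (m + 1))) | j ∈ S} =
        {S ∈ powersetCard (k + 1) (univ : Finset (Fin (m + 1))) | {j} ⊆ S} := by simp
    rw [hfilter, card_filter_powersetCard_subset {j} univ (k + 1) (subset_univ _) (by simp)]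
    simp only [card_univ, Fintype.card_fin, card_singleton, Nat.add_sub_cancel]
    rw [Nat.add_one_mul_choose_eq, mul_comm]

lemma sum_powersetCard_div_ite {m k : ℕ} (hkm : k ≤ m) {s q : ℝ} (hs : s ≠ 0) (hq : q ≠ 0)
    (j : Fin m) :
    ∑ S ∈ powersetCard k univ, 1 / (m.choose k : ℝ) / (if j ∈ S then s else q) =
      (k * q + (m - k : ℕ) * s) / (m * s * q) := by
  have hm : (m : ℝ) ≠ 0 := by have := j.pos; positivity
  have hC : (m.choose k : ℝ) ≠ 0 := by have := Nat.choose_pos hkm; positivity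
  have hcount : (m : ℝ) * #{S ∈ powersetCard k univ | j ∈ S} = k * m.choose k := by
    exact_mod_cast mul_card_filter_mem_powersetCard k j
  have hsplit : (#{S ∈ powersetCard k univ | j ∈ S} : ℝ) + #{S ∈ powersetCard k univ | j ∉ S} =
      m.choose k := by
    have h := card_filter_add_card_filter_not (s := powersetCard k (univ : Finset (Fin m)))
      (fun S => j ∈ S)
    rw [card_powersetCard, card_univ, Fintype.card_fin] at h
    exact_mod_cast h
  rw [sum_congr rfl fun S _ => apply_ite (1 / (m.choose k : ℝ) / ·) _ _ _, sum_ite, sum_const,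
    sum_const, nsmul_eq_mul, nsmul_eq_mul, Nat.cast_sub hkm]
  field_simp
  linear_combination (q - s) * hcount + s * m * hsplit

theorem ellNorm_le_prod_splitNorm_rpow {m n k : ℕ} (hkm : k ≤ m) {s q ρ : ℝ} (hs : 0 < s)
    (hsq : s ≤ q) (hρ : 0 < ρ) (hρsq : 1 / ρ = (k * q + (m - k : ℕ) * s) / (m * s * q))
    (x : (Fin m → Fin n) → ℝ≥0) :
    ellNorm ρ x ≤ ∏ S ∈ powersetCard k univ, splitNorm S s q x ^ (1 / (m.choose k : ℝ)) := by
  have hq : 0 < q := hs.trans_le hsq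
  have hw1 : ∑ _S ∈ powersetCard k (univ : Finset (Fin m)), 1 / (m.choose k : ℝ) = 1 := by
    have := Nat.choose_pos hkm
    rw [sum_const, card_powersetCard, card_univ, Fintype.card_fin, nsmul_eq_mul,
      mul_one_div_cancel (by positivity)]
  calc ellNorm ρ x = mixedNorm m (fun _ => ρ) x := (mixedNorm_const hρ.ne' m x).symm
    _ ≤ ∏ S ∈ powersetCard k univ,
          mixedNorm m (fun j => if j ∈ S then s else q) x ^ (1 / (m.choose k : ℝ)) :=
        mixedNorm_le_prod_rpow _ (fun _ _ => by positivity) hw1 m (fun _ => hρ)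
          (fun S _ j => by split_ifs <;> assumption)
          (fun j => hρsq.trans (sum_powersetCard_div_ite hkm hs.ne' hq.ne' j).symm) x
    _ ≤ ∏ S ∈ powersetCard k univ, splitNorm S s q x ^ (1 / (m.choose k : ℝ)) := by
        gcongr with S
        exact mixedNorm_le_splitNorm hs hsq m S x

theorem blei_interpolation_general (m n k : ℕ) (hm : 0 < m) (hkm : k ≤ m) (s q : ℝ) (hs : 1 ≤ s)
    (hsq : s ≤ q) (a : (Fin m → Fin n) → ℂ) :
    (∑ i : Fin m → Fin n, ‖a i‖ ^ ((m * s * q) / (k * q + (m - k : ℕ) * s))) ^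
        ((k * q + (m - k : ℕ) * s) / (m * s * q)) ≤
      ∏ S ∈ Finset.powersetCard k (Finset.univ : Finset (Fin m)),
        ((∑ g : {x // x ∈ S} → Fin n,
            (∑ h : {x // x ∈ Sᶜ} → Fin n, ‖a (mergeIndex S g h)‖ ^ q) ^ (s / q)) ^
          (1 / s)) ^ (1 / (Nat.choose m k : ℝ)) := by
  have hs0 : 0 < s := one_pos.trans_le hs
  have hq0 : 0 < q := hs0.trans_le hsq
  have hD : (m * s : ℝ) ≤ k * q + (m - k : ℕ) * s := by
    rw [Nat.cast_sub hkm]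
    linarith [mul_le_mul_of_nonneg_left hsq (Nat.cast_nonneg (α := ℝ) k)]
  have hρ : 0 < (m * s * q) / (k * q + (m - k : ℕ) * s : ℝ) := by
    have : (0 : ℝ) < m * s := mul_pos (Nat.cast_pos.2 hm) hs0
    exact div_pos (mul_pos this hq0) (this.trans_le hD)
  have key := ellNorm_le_prod_splitNorm_rpow hkm hs0 hsq hρ (one_div_div _ _) fun i => ‖a i‖₊
  rw [← NNReal.coe_le_coe] at key
  simpa only [ellNorm, splitNorm_eq, one_div_div, NNReal.coe_rpow, NNReal.coe_sum,
    NNReal.coe_prod, coe_nnnorm] using key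

/-- **Generalized Blei inequality** (Bayart–Pellegrino–Seoane-Sepúlveda):
for `1 ≤ k ≤ m`, `1 ≤ s ≤ q` and `ρ = msq/(kq+(m-k)s)`,
`(∑_i |a_i|^ρ)^{1/ρ} ≤ ∏_{S ∈ P_k(m)} [(∑_{i_S}(∑_{i_Ŝ}|a_i|^q)^{s/q})^{1/s}]^{1/C(m,k)}`. -/
theorem blei_interpolation (m n k : ℕ) (hm : 0 < m) (hn : 0 < n)
    (hk1 : 1 ≤ k) (hkm : k ≤ m) (s q : ℝ) (hs : 1 ≤ s) (hsq : s ≤ q)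
    (a : (Fin m → Fin n) → ℂ) :
    (∑ i : Fin m → Fin n, ‖a i‖ ^ ((m * s * q) / (k * q + (m - k : ℕ) * s))) ^
        ((k * q + (m - k : ℕ) * s) / (m * s * q)) ≤
      ∏ S ∈ Finset.powersetCard k (Finset.univ : Finset (Fin m)),
        ((∑ g : {x // x ∈ S} → Fin n,
            (∑ h : {x // x ∈ Sᶜ} → Fin n, ‖a (mergeIndex S g h)‖ ^ q) ^ (s / q)) ^
          (1 / s)) ^ (1 / (Nat.choose m k : ℝ)) :=
  blei_interpolation_general m n k hm hkm s q hs hsq a
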